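/- Let {ξ, A, ξ×A} ⊆ S² ∩ ℚ³ be an orthonormal basis of ℝ³ and let n* ∈ ℕ be such that n*ξ, n*A, n*(ξ×A) ∈ ℤ³. Let F : ℝ → ℝ be 2π-periodic and continuous and let G : ℝ² → ℝ be 2π-periodic in each variable and continuous. Fix c > 0 with the property that f(x) := F(c n* (x·ξ + μt)) and g(x) := G(c n* (x−α)·A, c n* (x−α)·(ξ×A)) are 2π-periodic in each coordinate of x for every t ∈ ℝ, α ∈ ℝ³, μ ∈ ℝ (as is the case for the intermittent jets, where c = r_⊥λ with λ r_⊥ ∈ ℕ). Then for every p ∈ [1,∞), sup_{t∈ℝ} ‖f g‖_{L^p(T³)} = (2π)^{−3/p} (sup_{t∈ℝ} ‖f‖_{L^p(T³)}) ‖g‖_{L^p(T³)}; more precisely, at each fixed t one has ∫_{T³} |f g|^p dx = (2π)^{−3} (∫_{T³} |f|^p dx)(∫_{T³} |g|^p dx). -/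

import Mathlib

/-!
The function `|g|^p` is constant along `ξ`, because `ξ` is orthogonal to `A` and to `ξ × A`,
while `|f|^p = H(c n* (x·ξ + μt))` with `H = |F|^p`. Since `|fg|^p` is `2π`-periodic in every
coordinate, its integral over `T³` is unchanged by the translations `x ↦ x + sξ`, which shift
`x·ξ` by `s` as `ξ` is a unit vector. Averaging over `s ∈ (0, 2π/(c n*)]` and exchanging the
integrals replaces `H` by its mean `(2π)⁻¹ ∫₀^{2π} H`, so `∫|fg|^p = (2π)⁻¹ (∫₀^{2π} H) ∫|g|^p`.
The case `g = 1` gives `∫|f|^p = (2π)² ∫₀^{2π} H`, and the identity for the suprema follows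
factor by factor since all integrals are nonnegative.
-/

open MeasureTheory Real
open scoped ENNReal NNReal

noncomputable section

abbrev R3 := Fin 3 → ℝ
abbrev Z3 := Fin 3 → ℤ

def cube : Set R3 := Set.univ.pi fun _ => Set.Icc 0 (2 * π)

def μT3 : Measure R3 := volume.restrict cube

def Periodic3 {α : Type*} (u : R3 → α) : Prop :=
  ∀ (x : R3) (k : Z3), u (fun i => x i + 2 * π * (k i)) = u x

def dotZ (n : Z3) (x : R3) : ℝ := ∑ i, (n i : ℝ) * x i

def eZ (n : Z3) (x : R3) : ℂ := Complex.exp (Complex.I * (dotZ n x : ℂ))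

def fCoeff (u : R3 → ℂ) (n : Z3) : ℂ :=
  (1 / (2 * π) ^ 3 : ℝ) • ∫ y in cube, Complex.exp (-(Complex.I * (dotZ n y : ℂ))) * u y

def normZsq (n : Z3) : ℝ := ∑ i, (n i : ℝ) ^ 2

def pd {E : Type*} [NormedAddCommGroup E] [NormedSpace ℝ E] (i : Fin 3) (h : R3 → E) :
    R3 → E :=
  fun x => fderiv ℝ h x (Pi.single i 1)

def cross (u v : R3) : R3 :=
  ![u 1 * v 2 - u 2 * v 1, u 2 * v 0 - u 0 * v 2, u 0 * v 1 - u 1 * v 0]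

/-- `f(t,x) = F(c n* (x·ξ + μt))`. -/
def jetF (F : ℝ → ℝ) (c : ℝ) (nstar : ℕ) (ξ : R3) (μ t : ℝ) (x : R3) : ℝ :=
  F (c * (nstar : ℝ) * ((∑ i, x i * ξ i) + μ * t))

/-- `g(x) = G(c n* (x-α)·A, c n* (x-α)·(ξ×A))`. -/
def jetG (G : ℝ → ℝ → ℝ) (c : ℝ) (nstar : ℕ) (ξ A α : R3) (x : R3) : ℝ :=
  G (c * (nstar : ℝ) * (∑ i, (x i - α i) * A i))
    (c * (nstar : ℝ) * (∑ i, (x i - α i) * cross ξ A i))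


open Set

/-- The lattice `(2πℤ)³` is the `ℤ`-span of this basis, which puts the periodicity of
`Periodic3` functions within reach of `ZSpan.isAddFundamentalDomain'`. -/
def twoPiBasis : Module.Basis (Fin 3) ℝ R3 :=
  (Pi.basisFun ℝ (Fin 3)).unitsSMul fun _ => Units.mk0 (2 * π) (by positivity)

lemma twoPiBasis_repr_apply (x : R3) (i : Fin 3) : twoPiBasis.repr x i = x i / (2 * π) := by
  simp [twoPiBasis, Module.Basis.repr_unitsSMul, Units.smul_def, div_eq_inv_mul]

lemma fundamentalDomain_twoPiBasis :
    ZSpan.fundamentalDomain twoPiBasis = univ.pi fun _ => Ico 0 (2 * π) := by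
  ext x
  simp only [ZSpan.fundamentalDomain, mem_ofPred_eq, twoPiBasis_repr_apply, mem_pi, mem_univ,
    forall_const, mem_Ico, div_nonneg_iff, div_lt_one two_pi_pos]
  grind [two_pi_pos]

lemma exists_eq_two_pi_mul_of_mem_span {l : R3}
    (hl : l ∈ Submodule.span ℤ (range twoPiBasis)) : ∃ k : Z3, ∀ i, l i = 2 * π * k i := by
  rw [twoPiBasis.mem_span_iff_repr_mem ℤ] at hl
  choose k hk using hl
  refine ⟨k, fun i => ?_⟩
  have hki := hk i
  rw [twoPiBasis_repr_apply, eq_div_iff two_pi_pos.ne', eq_intCast] at hki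
  rw [← hki, mul_comm]

lemma cube_ae_eq_fundamentalDomain :
    cube =ᵐ[volume] ZSpan.fundamentalDomain twoPiBasis := by
  rw [fundamentalDomain_twoPiBasis]
  exact Measure.pi_Ico_ae_eq_pi_Icc.symm

section Periodic3

variable {α β : Type*}

lemma Periodic3.comp {u : R3 → α} (hu : Periodic3 u) (g : α → β) :
    Periodic3 fun x => g (u x) :=
  fun x k => congrArg g (hu x k)

lemma Periodic3.mul [Mul α] {u v : R3 → α} (hu : Periodic3 u) (hv : Periodic3 v) :
    Periodic3 fun x => u x * v x :=
  fun x k => congrArg₂ (· * ·) (hu x k) (hv x k)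

variable {E : Type*} [NormedAddCommGroup E] [NormedSpace ℝ E]

lemma Periodic3.setIntegral_add_right {h : R3 → E} (hper : Periodic3 h) (y : R3) :
    ∫ x in cube, h (x + y) = ∫ x in cube, h x := by
  let L := (Submodule.span ℤ (range twoPiBasis)).toAddSubgroup
  have hD : IsAddFundamentalDomain L (ZSpan.fundamentalDomain twoPiBasis) volume :=
    ZSpan.isAddFundamentalDomain' twoPiBasis volume
  have hDy : IsAddFundamentalDomain L ((· + y) '' ZSpan.fundamentalDomain twoPiBasis) volume :=
    hD.image_of_equiv (Equiv.addRight y)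
      (measurePreserving_add_right volume (-y)).quasiMeasurePreserving (Equiv.refl _)
      fun l x => add_assoc _ _ _
  have hinv : ∀ (l : L) (x : R3), h (l +ᵥ x) = h x := by
    rintro ⟨l, hl⟩ x
    obtain ⟨k, hk⟩ := exists_eq_two_pi_mul_of_mem_span ((Submodule.mem_toAddSubgroup _).1 hl)
    have hlx : l + x = fun i => x i + 2 * π * k i := funext fun i => by
      simp [hk i, add_comm]
    exact (congrArg h hlx).trans (hper x k)
  have : Countable L := inferInstanceAs (Countable (Submodule.span ℤ (range twoPiBasis)))
  rw [setIntegral_congr_set cube_ae_eq_fundamentalDomain,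
    setIntegral_congr_set cube_ae_eq_fundamentalDomain,
    ← (measurePreserving_add_right volume y).setIntegral_image_emb
      (MeasurableEquiv.addRight y).measurableEmbedding]
  exact hDy.setIntegral_eq hD hinv

lemma Periodic3.setIntegral_setIntegral_Ioc_add_smul [CompleteSpace E] {h : R3 → E}
    (hper : Periodic3 h) (hh : Continuous h) (v : R3) {L : ℝ} (hL : 0 ≤ L) :
    ∫ x in cube, ∫ s in Ioc 0 L, h (x + s • v) = L • ∫ x in cube, h x := by
  have hint : Integrable (Function.uncurry fun s x => h (x + s • v))
      ((volume.restrict (Ioc 0 L)).prod (volume.restrict cube)) := by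
    rw [Measure.prod_restrict, ← Measure.volume_eq_prod]
    refine IntegrableOn.mono_set ?_ (prod_mono Ioc_subset_Icc_self subset_rfl)
    exact ContinuousOn.integrableOn_compact (isCompact_Icc.prod (isCompact_univ_pi fun _ =>
      isCompact_Icc)) (by fun_prop)
  rw [← integral_integral_swap hint]
  simp only [hper.setIntegral_add_right]
  rw [setIntegral_const, volume_real_Ioc_of_le hL, sub_zero]

end Periodic3

lemma Function.Periodic.intervalIntegral_comp_mul_add {E : Type*} [NormedAddCommGroup E]
    [NormedSpace ℝ E] {H : ℝ → E} {T : ℝ} (hH : Function.Periodic H T) {b : ℝ} (hb : b ≠ 0)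
    (a : ℝ) : ∫ s in 0..T / b, H (b * s + a) = b⁻¹ • ∫ u in 0..T, H u := by
  rw [intervalIntegral.integral_comp_mul_add H hb a, mul_zero, zero_add, mul_div_cancel₀ _ hb,
    add_comm, hH.intervalIntegral_add_eq a 0, zero_add]

lemma sum_add_smul_mul (x v u : R3) (s : ℝ) :
    ∑ i, (x + s • v) i * u i = ∑ i, x i * u i + s * ∑ i, v i * u i := by
  simp only [Pi.add_apply, Pi.smul_apply, smul_eq_mul, add_mul, Finset.sum_add_distrib,
    Finset.mul_sum, mul_assoc]

lemma setIntegral_comp_dot_mul {H : ℝ → ℝ} (hH : Continuous H)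
    (hHper : Function.Periodic H (2 * π)) {w : R3 → ℝ} (hw : Continuous w) {ξ : R3}
    (hwξ : ∀ (s : ℝ) (x : R3), w (x + s • ξ) = w x) (hξ : ∑ i, ξ i ^ 2 = 1) {b : ℝ} (hb : 0 < b)
    (θ : ℝ) (hper : Periodic3 fun x => H (b * (∑ i, x i * ξ i + θ)) * w x) :
    ∫ x in cube, H (b * (∑ i, x i * ξ i + θ)) * w x
      = (2 * π)⁻¹ * (∫ u in 0..2 * π, H u) * ∫ x in cube, w x := by
  have hξ' : ∑ i, ξ i * ξ i = 1 := by simpa only [sq] using hξ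
  have hline : ∀ x : R3, ∫ s in Ioc 0 (2 * π / b),
      H (b * (∑ i, (x + s • ξ) i * ξ i + θ)) * w (x + s • ξ)
        = (b⁻¹ * ∫ u in 0..2 * π, H u) * w x := by
    intro x
    have harg : ∀ s, b * (∑ i, (x + s • ξ) i * ξ i + θ) = b * s + b * (∑ i, x i * ξ i + θ) :=
      fun s => by rw [sum_add_smul_mul, hξ']; ring
    simp only [harg, hwξ]
    rw [integral_mul_const, ← intervalIntegral.integral_of_le (by positivity),
      hHper.intervalIntegral_comp_mul_add hb.ne', smul_eq_mul]
  have havg := hper.setIntegral_setIntegral_Ioc_add_smul (by fun_prop) ξ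
    (L := 2 * π / b) (by positivity)
  simp only [hline, integral_const_mul, smul_eq_mul] at havg
  field_simp at havg ⊢
  linear_combination havg.symm

lemma volume_real_cube : volume.real cube = (2 * π) ^ 3 := by
  simp [cube, measureReal_def, Real.volume_Icc_pi, pi_pos.le]

lemma sum_mul_cross_self (ξ A : R3) : ∑ i, ξ i * cross ξ A i = 0 :=
  dot_self_cross ξ A

section Jets

variable {G : ℝ → ℝ → ℝ} {c : ℝ} {nstar : ℕ} {ξ A α : R3}

lemma continuous_jetG (hG : Continuous fun q : ℝ × ℝ => G q.1 q.2) :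
    Continuous (jetG G c nstar ξ A α) :=
  hG.comp (f := fun x : R3 => (c * nstar * ∑ i, (x i - α i) * A i,
    c * nstar * ∑ i, (x i - α i) * cross ξ A i)) (by fun_prop)

lemma jetG_add_smul (horth : ∑ i, ξ i * A i = 0) (s : ℝ) (x : R3) :
    jetG G c nstar ξ A α (x + s • ξ) = jetG G c nstar ξ A α x := by
  have hshift : ∀ u : R3,
      ∑ i, ((x + s • ξ) i - α i) * u i = ∑ i, (x i - α i) * u i + s * ∑ i, ξ i * u i :=
    fun u => by simp only [Fin.sum_univ_three, Pi.add_apply, Pi.smul_apply, smul_eq_mul]; ring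
  simp only [jetG, hshift, horth, sum_mul_cross_self, mul_zero, add_zero]

end Jets

lemma iSup_ofReal_rpow_mul_mul {ι : Sort*} {a b : ℝ} (ha : 0 ≤ a) (hb : 0 ≤ b) {f : ι → ℝ}
    (hf : ∀ i, 0 ≤ f i) (r : ℝ) :
    ⨆ i, ENNReal.ofReal ((a * f i * b) ^ r)
      = ENNReal.ofReal (a ^ r) * (⨆ i, ENNReal.ofReal (f i ^ r)) * ENNReal.ofReal (b ^ r) := by
  rw [ENNReal.mul_iSup, ENNReal.iSup_mul]
  refine iSup_congr fun i => ?_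
  have hfi := hf i
  rw [Real.mul_rpow (by positivity) hb, Real.mul_rpow ha hfi,
    ENNReal.ofReal_mul (by positivity), ENNReal.ofReal_mul (by positivity)]

lemma one_div_pow_rpow_one_div {x : ℝ} (hx : 0 ≤ x) (n : ℕ) (p : ℝ) :
    (1 / x ^ n) ^ (1 / p) = x ^ (-(n / p)) := by
  rw [one_div, Real.inv_rpow (by positivity), ← Real.rpow_natCast, ← Real.rpow_mul hx,
    Real.rpow_neg hx, mul_one_div]

theorem jets_product_Lp_factorization
    (ξ A : R3) (hξu : ∑ i, ξ i ^ 2 = 1)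
    (horth : ∑ i, ξ i * A i = 0)
    (nstar : ℕ) (hn : 0 < nstar)
    (F : ℝ → ℝ) (hF : Continuous F) (hFper : Function.Periodic F (2 * π))
    (G : ℝ → ℝ → ℝ) (hG : Continuous fun q : ℝ × ℝ => G q.1 q.2)
    (c : ℝ) (hc : 0 < c)
    (hfper : ∀ t μ : ℝ, Periodic3 (jetF F c nstar ξ μ t))
    (hgper : ∀ α : R3, Periodic3 (jetG G c nstar ξ A α))
    (p : ℝ) (hp : 1 ≤ p) (μ : ℝ) (α : R3) :
    (∀ t : ℝ,
      (∫ x in cube, |jetF F c nstar ξ μ t x * jetG G c nstar ξ A α x| ^ p)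
        = (1 / (2 * π) ^ 3)
          * (∫ x in cube, |jetF F c nstar ξ μ t x| ^ p)
          * (∫ x in cube, |jetG G c nstar ξ A α x| ^ p)) ∧
    ((⨆ t : ℝ, ENNReal.ofReal
        ((∫ x in cube, |jetF F c nstar ξ μ t x * jetG G c nstar ξ A α x| ^ p) ^ (1 / p)))
      = ENNReal.ofReal ((2 * π) ^ (-(3 / p)))
        * (⨆ t : ℝ, ENNReal.ofReal
            ((∫ x in cube, |jetF F c nstar ξ μ t x| ^ p) ^ (1 / p)))
        * ENNReal.ofReal ((∫ x in cube, |jetG G c nstar ξ A α x| ^ p) ^ (1 / p))) := by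
  have hp0 : 0 ≤ p := zero_le_one.trans hp
  have hH : Continuous fun u => |F u| ^ p := hF.abs.rpow_const fun _ => Or.inr hp0
  have hHper : Function.Periodic (fun u => |F u| ^ p) (2 * π) := fun u => by
    simp only [hFper u]
  set K := ∫ u in 0..2 * π, |F u| ^ p
  have havg (t : ℝ) {w : R3 → ℝ} (hw : Continuous w)
      (hwξ : ∀ (s : ℝ) (x : R3), w (x + s • ξ) = w x)
      (hper : Periodic3 fun x => |jetF F c nstar ξ μ t x| ^ p * w x) :
      ∫ x in cube, |jetF F c nstar ξ μ t x| ^ p * w x = (2 * π)⁻¹ * K * ∫ x in cube, w x :=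
    setIntegral_comp_dot_mul hH hHper hw hwξ hξu (by positivity) (μ * t) hper
  have hf (t : ℝ) :
      ∫ x in cube, |jetF F c nstar ξ μ t x| ^ p = (2 * π)⁻¹ * K * (2 * π) ^ 3 := by
    simpa [volume_real_cube] using havg t (w := fun _ => 1) continuous_const (fun _ _ => rfl)
      (((hfper t μ).comp (|·| ^ p)).mul fun _ _ => rfl)
  have hfg (t : ℝ) : ∫ x in cube, |jetF F c nstar ξ μ t x * jetG G c nstar ξ A α x| ^ p
      = (2 * π)⁻¹ * K * ∫ x in cube, |jetG G c nstar ξ A α x| ^ p := by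
    simp_rw [abs_mul, Real.mul_rpow (abs_nonneg _) (abs_nonneg _)]
    exact havg t ((continuous_jetG hG).abs.rpow_const fun _ => Or.inr hp0)
      (fun s x => by rw [jetG_add_smul horth])
      (((hfper t μ).comp (|·| ^ p)).mul ((hgper α).comp (|·| ^ p)))
  have hprod (t : ℝ) : ∫ x in cube, |jetF F c nstar ξ μ t x * jetG G c nstar ξ A α x| ^ p
      = 1 / (2 * π) ^ 3 * (∫ x in cube, |jetF F c nstar ξ μ t x| ^ p)
        * ∫ x in cube, |jetG G c nstar ξ A α x| ^ p := by
    rw [hfg, hf]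
    field_simp
  refine ⟨hprod, ?_⟩
  simp_rw [hprod]
  rw [iSup_ofReal_rpow_mul_mul (by positivity) (integral_nonneg fun _ => by positivity)
    (fun _ => integral_nonneg fun _ => by positivity), one_div_pow_rpow_one_div two_pi_pos.le 3]
  norm_num
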